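/- Consider the coordination game where φ ∈ {0, π/4} and ψ ∈ {−π/8, π/8} are independent uniform, and the players win iff they play opposite actions, except when (φ,ψ) = (π/4, −π/8) when they must play equal actions. In the quantum strategy where the players share the singlet state η = (1/√2)(|01⟩ − |10⟩), player A measures in the rotated basis with angle θ₁ = φ, player B with angle θ₂ = ψ, and each plays the observed outcome, the winning probability equals cos²(π/8), which is strictly greater than 3/4. -/

import Mathlib

open Matrix Kronecker Real

/-- `|v⟩⟨v|`, the rank-one operator associated to a vector `v`. -/
noncomputable def ketbra {d : Type*} [Fintype d] (v : d → ℂ) : Matrix d d ℂ :=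
  vecMulVec v (star v)

/-- The singlet state vector `η = (1/√2)(|01⟩ − |10⟩)` in ℂ²⊗ℂ². -/
noncomputable def singlet : Fin 2 × Fin 2 → ℂ := fun p =>
  (1 / Real.sqrt 2 : ℝ) *
    ((![1, 0] : Fin 2 → ℂ) p.1 * (![0, 1] : Fin 2 → ℂ) p.2 -
     (![0, 1] : Fin 2 → ℂ) p.1 * (![1, 0] : Fin 2 → ℂ) p.2)

/-- Rotated basis vectors `m₀(θ) = cos θ |0⟩ + sin θ |1⟩`,
`m₁(θ) = −sin θ |0⟩ + cos θ |1⟩`. -/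
noncomputable def mvec (i : Fin 2) (θ : ℝ) : Fin 2 → ℂ :=
  if i = 0 then ![(Real.cos θ : ℂ), (Real.sin θ : ℂ)]
  else ![(-Real.sin θ : ℂ), (Real.cos θ : ℂ)]

/-- Probability of joint outcome `(i,j)` measuring the singlet in rotated bases. -/
noncomputable def pOutcome (θ₁ θ₂ : ℝ) (i j : Fin 2) : ℂ :=
  ((ketbra (mvec i θ₁) ⊗ₖ ketbra (mvec j θ₂)) * ketbra singlet).trace

/-- A's measurement angle for state `φ ∈ {0, π/4}`. -/
noncomputable def φval : Fin 2 → ℝ := ![0, π / 4]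
/-- B's measurement angle for state `ψ ∈ {−π/8, π/8}`. -/
noncomputable def ψval : Fin 2 → ℝ := ![-(π / 8), π / 8]

/-- Winning probability of the quantum strategy: each player measures at the
angle given by their state and plays the observed outcome; they win iff the
outcomes are opposite, except on the state pair `(π/4, −π/8)` (indices `(1,0)`)
where they must be equal. -/
noncomputable def quantumWinProb : ℂ :=
  (1 / 4 : ℂ) * ∑ φ : Fin 2, ∑ ψ : Fin 2,
    if φ = 1 ∧ ψ = 0 then
      pOutcome (φval φ) (ψval ψ) 0 0 + pOutcome (φval φ) (ψval ψ) 1 1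
    else
      pOutcome (φval φ) (ψval ψ) 0 1 + pOutcome (φval φ) (ψval ψ) 1 0

/-!
The amplitude of the product basis vector `a ⊗ b` in the singlet is the determinant
`(a₀b₁ − a₁b₀)/√2`. For two rotation vectors this is `±sin` or `±cos` of `θ₂ − θ₁`, so equal
outcomes occur with probability `sin²(θ₂ − θ₁)` and opposite ones with `cos²(θ₂ − θ₁)`. The angle
difference is `±π/8` on the three state pairs that ask for opposite actions and `−3π/8` on the
one that asks for equal actions, so each pair is won with probability
`cos²(π/8) = (2 + √2)/4 > 3/4`.
-/

lemma ketbra_kronecker_ketbra {m n : Type*} [Fintype m] [Fintype n] (u : m → ℂ) (v : n → ℂ) :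
    ketbra u ⊗ₖ ketbra v = ketbra (fun p : m × n => u p.1 * v p.2) := by
  ext p q
  simp only [ketbra, kroneckerMap_apply, vecMulVec_apply, Pi.star_apply, star_mul']
  ring

lemma trace_ketbra_mul_ketbra {d : Type*} [Fintype d] (u v : d → ℂ) :
    (ketbra u * ketbra v).trace = (Complex.normSq (star u ⬝ᵥ v) : ℂ) := by
  rw [ketbra, ketbra, vecMulVec_mul_vecMulVec, trace_vecMulVec, dotProduct_smul,
    dotProduct_star, dotProduct_comm v, Complex.normSq_eq_conj_mul_self, smul_eq_mul, mul_comm,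
    Complex.star_def]

lemma star_kronecker_dotProduct_singlet (a b : Fin 2 → ℂ) :
    star (fun p : Fin 2 × Fin 2 => a p.1 * b p.2) ⬝ᵥ singlet =
      star (a 0 * b 1 - a 1 * b 0) / (Real.sqrt 2 : ℂ) := by
  simp only [dotProduct, singlet, Fintype.sum_prod_type, Fin.sum_univ_two, Pi.star_apply,
    star_mul', star_sub, cons_val_zero, cons_val_one]
  push_cast
  ring

lemma pOutcome_eq_normSq (θ₁ θ₂ : ℝ) (i j : Fin 2) :
    pOutcome θ₁ θ₂ i j = ((1 / 2 * Complex.normSq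
      (mvec i θ₁ 0 * mvec j θ₂ 1 - mvec i θ₁ 1 * mvec j θ₂ 0) : ℝ) : ℂ) := by
  rw [pOutcome, ketbra_kronecker_ketbra, trace_ketbra_mul_ketbra,
    star_kronecker_dotProduct_singlet, Complex.normSq_div, Complex.star_def, Complex.normSq_conj,
    Complex.normSq_ofReal, Real.mul_self_sqrt zero_le_two]
  ring_nf

lemma pOutcome_eq_of_amplitude {θ₁ θ₂ : ℝ} {i j : Fin 2} {r : ℝ}
    (h : mvec i θ₁ 0 * mvec j θ₂ 1 - mvec i θ₁ 1 * mvec j θ₂ 0 = r) :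
    pOutcome θ₁ θ₂ i j = ((1 / 2 * r ^ 2 : ℝ) : ℂ) := by
  rw [pOutcome_eq_normSq, h, Complex.normSq_ofReal, sq]

lemma pOutcome_equal_outcomes (θ₁ θ₂ : ℝ) :
    pOutcome θ₁ θ₂ 0 0 + pOutcome θ₁ θ₂ 1 1 = (Real.sin (θ₂ - θ₁) ^ 2 : ℝ) := by
  rw [pOutcome_eq_of_amplitude (r := Real.sin (θ₂ - θ₁)),
    pOutcome_eq_of_amplitude (r := Real.sin (θ₂ - θ₁))]
  · push_cast; ring
  all_goals
    simp only [mvec, one_ne_zero, ↓reduceIte, cons_val_zero, cons_val_one]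
    push_cast [Real.sin_sub]
    ring

lemma pOutcome_opposite_outcomes (θ₁ θ₂ : ℝ) :
    pOutcome θ₁ θ₂ 0 1 + pOutcome θ₁ θ₂ 1 0 = (Real.cos (θ₂ - θ₁) ^ 2 : ℝ) := by
  rw [pOutcome_eq_of_amplitude (r := Real.cos (θ₂ - θ₁)),
    pOutcome_eq_of_amplitude (r := -Real.cos (θ₂ - θ₁))]
  · push_cast; ring
  all_goals
    simp only [mvec, one_ne_zero, ↓reduceIte, cons_val_zero, cons_val_one]
    push_cast [Real.cos_sub]
    ring

lemma cos_sq_pi_div_eight : Real.cos (π / 8) ^ 2 = (2 + Real.sqrt 2) / 4 := by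
  rw [Real.cos_pi_div_eight, div_pow, Real.sq_sqrt (by positivity)]
  norm_num

/-- The quantum strategy wins with probability `cos²(π/8) > 3/4`. -/
theorem quantum_win_prob :
    quantumWinProb = (Real.cos (π / 8) ^ 2 : ℝ) ∧
    (3 / 4 : ℝ) < Real.cos (π / 8) ^ 2 := by
  refine ⟨?_, ?_⟩
  · have hsin : Real.sin (-(π / 8) - π / 4) ^ 2 = Real.cos (π / 8) ^ 2 := by
      rw [show -(π / 8) - π / 4 = -(π / 2 - π / 8) by ring, Real.sin_neg,
        Real.sin_pi_div_two_sub, neg_sq]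
    have hcos : π / 8 - π / 4 = -(π / 8) := by ring
    simp only [quantumWinProb, Fin.sum_univ_two, φval, ψval, cons_val_zero, cons_val_one,
      zero_ne_one, one_ne_zero, and_true, and_false, ↓reduceIte,
      pOutcome_equal_outcomes, pOutcome_opposite_outcomes, sub_zero, hsin, hcos, Real.cos_neg]
    push_cast
    ring
  · rw [cos_sq_pi_div_eight]
    linarith [Real.one_lt_sqrt_two]
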